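/- Let n ≥ 1 and let C, D ∈ ℝ^{n×n} be symmetric. Define OGW_o(C,D) := (1/n²)(‖C‖_F² + ‖D‖_F² − 2·sup_{P ∈ O_n} tr(C P D Pᵀ)), where O_n := {P ∈ ℝ^{n×n} : Pᵀ P = I}. Then OGW_o(C,D) = (1/n²)·Σ_{i=1}^n (λᵢ↓(C) − λᵢ↓(D))², where λ₁↓(X) ≥ … ≥ λ_n↓(X) denote the eigenvalues of a symmetric matrix X in descending order. In particular OGW_o(C,D) ≥ 0, OGW_o is symmetric in its arguments, and √OGW_o satisfies the triangle inequality on symmetric n×n matrices. -/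

import Mathlib

/-!
Diagonalize `C = U Λ Uᵀ` and `D = V M Vᵀ` orthogonally, with the eigenvalues `λ`, `μ` sorted
decreasingly. For orthogonal `P` the matrix `Q = Uᵀ P V` is orthogonal and
`tr (C P D Pᵀ) = ∑ᵢⱼ λᵢ μⱼ Qᵢⱼ²`. The squared entries of an orthogonal matrix form a doubly
stochastic matrix, which by Birkhoff's theorem is a convex combination of permutation matrices,
and by the rearrangement inequality no permutation beats the identity. So the supremum is
`∑ᵢ λᵢ μᵢ`, attained at `P = U Vᵀ`; since `‖C‖_F² = ∑ λᵢ²` and `‖D‖_F² = ∑ μᵢ²`,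
`n² OGW_o(C, D) = ‖λ - μ‖²`, a squared Euclidean distance.
-/

open Matrix BigOperators

noncomputable section

/-- Squared Frobenius norm of a real matrix. -/
def frobSq {m n : ℕ} (A : Matrix (Fin m) (Fin n) ℝ) : ℝ := ∑ i, ∑ j, (A i j) ^ 2

/-- Euclidean norm of a real vector. -/
def vnorm {n : ℕ} (v : Fin n → ℝ) : ℝ := Real.sqrt (∑ i, (v i) ^ 2)

/-- Eigenvalues of a real symmetric (Hermitian) matrix, listed in descending order. -/
def eigDesc {n : ℕ} {A : Matrix (Fin n) (Fin n) ℝ} (hA : A.IsHermitian) : Fin n → ℝ :=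
  fun i => (hA.eigenvalues ∘ Tuple.sort hA.eigenvalues) i.rev

/-- Conjugating a real symmetric (Hermitian) matrix preserves symmetry. -/
theorem conjHerm {n m : ℕ} (V : Matrix (Fin n) (Fin m) ℝ) {C : Matrix (Fin n) (Fin n) ℝ}
    (hC : C.IsHermitian) : (Vᵀ * C * V).IsHermitian := by
  have h := Matrix.isHermitian_mul_mul_conjTranspose Vᵀ hC
  simpa using h


/-- The relaxation `OGW_o` of the orthogonal Gromov-Wasserstein discrepancy,
optimizing the coupling over all orthogonal matrices. -/
def OGWo (n : ℕ) (C D : Matrix (Fin n) (Fin n) ℝ) : ℝ :=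
  (1 / (n : ℝ) ^ 2) * (frobSq C + frobSq D
    - 2 * sSup ((fun P => Matrix.trace (C * P * D * Pᵀ)) ''
        {P : Matrix (Fin n) (Fin n) ℝ | Pᵀ * P = 1}))

section CommRing

variable {ι R : Type*} [Fintype ι] [CommRing R]

theorem trace_conj_mul_conj (U V A B P : Matrix ι ι R) :
    trace (U * A * Uᵀ * P * (V * B * Vᵀ) * Pᵀ)
      = trace (A * (Uᵀ * P * V) * B * (Uᵀ * P * V)ᵀ) := by
  simp only [transpose_mul, transpose_transpose, Matrix.mul_assoc]
  rw [trace_mul_comm U]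
  simp only [Matrix.mul_assoc]

variable [DecidableEq ι]

theorem trace_diagonal_mul_mul_diagonal_mul_transpose (a b : ι → R) (Q : Matrix ι ι R) :
    trace (diagonal a * Q * diagonal b * Qᵀ) = a ᵥ* (Q ⊙ Q) ⬝ᵥ b := by
  rw [dotProduct_vecMul_hadamard, transpose_mul, diagonal_transpose, Matrix.mul_assoc]

theorem transpose_mem_orthogonalGroup {U : Matrix ι ι R} (hU : U ∈ orthogonalGroup ι R) :
    Uᵀ ∈ orthogonalGroup ι R :=
  (mem_orthogonalGroup_iff ι R).2 <| by
    rw [transpose_transpose]; exact (mem_orthogonalGroup_iff' ι R).1 hU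

theorem hadamard_self_mem_doublyStochastic [LinearOrder R] [IsStrictOrderedRing R]
    {Q : Matrix ι ι R} (hQ : Q ∈ orthogonalGroup ι R) : Q ⊙ Q ∈ doublyStochastic R ι := by
  refine mem_doublyStochastic_iff_sum.2
    ⟨fun i j => mul_self_nonneg (Q i j), fun i => ?_, fun j => ?_⟩
  · simpa [Matrix.mul_apply, Matrix.one_apply] using
      congrFun (congrFun ((mem_orthogonalGroup_iff ι R).1 hQ) i) i
  · simpa [Matrix.mul_apply, Matrix.one_apply] using
      congrFun (congrFun ((mem_orthogonalGroup_iff' ι R).1 hQ) j) j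

end CommRing

section VonNeumann

variable {ι R : Type*} [Fintype ι] [DecidableEq ι] [Field R] [LinearOrder R]
  [IsStrictOrderedRing R]

theorem Monovary.vecMul_dotProduct_le_of_mem_doublyStochastic {a b : ι → R}
    (hab : Monovary a b) {S : Matrix ι ι R} (hS : S ∈ doublyStochastic R ι) :
    a ᵥ* S ⬝ᵥ b ≤ a ⬝ᵥ b := by
  obtain ⟨w, hw0, hw1, rfl⟩ := exists_eq_sum_perm_of_mem_doublyStochastic hS
  calc a ᵥ* (∑ σ, w σ • σ.permMatrix R) ⬝ᵥ b
      = ∑ σ, w σ * ∑ i, a (σ.symm i) * b i := by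
        simp only [dotProduct, vecMul_sum, vecMul_smul, vecMul_permMatrix, Finset.sum_apply,
          Pi.smul_apply, Function.comp_apply, smul_eq_mul, Finset.sum_mul, Finset.mul_sum,
          mul_assoc]
        exact Finset.sum_comm
    _ ≤ ∑ σ : Equiv.Perm ι, w σ * (a ⬝ᵥ b) := by
        gcongr with σ
        · exact hw0 σ
        · exact hab.sum_comp_perm_mul_le_sum_mul
    _ = a ⬝ᵥ b := by rw [← Finset.sum_mul, hw1, one_mul]

theorem Monovary.isGreatest_trace_conj_diagonal {a b : ι → R} (hab : Monovary a b)
    {U V : Matrix ι ι R} (hU : U ∈ orthogonalGroup ι R) (hV : V ∈ orthogonalGroup ι R) :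
    IsGreatest ((fun P => trace (U * diagonal a * Uᵀ * P * (V * diagonal b * Vᵀ) * Pᵀ)) ''
      {P | Pᵀ * P = 1}) (a ⬝ᵥ b) := by
  have hO : {P : Matrix ι ι R | Pᵀ * P = 1} = orthogonalGroup ι R :=
    Set.ext fun P => (mem_orthogonalGroup_iff' ι R).symm
  rw [hO]
  refine ⟨⟨U * Vᵀ, mul_mem hU (transpose_mem_orthogonalGroup hV), ?_⟩, ?_⟩
  · have hQ : Uᵀ * (U * Vᵀ) * V = 1 := by
      rw [← Matrix.mul_assoc, (mem_orthogonalGroup_iff' ι R).1 hU, Matrix.one_mul,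
        (mem_orthogonalGroup_iff' ι R).1 hV]
    simp only [trace_conj_mul_conj, hQ, Matrix.mul_one, transpose_one, diagonal_mul_diagonal,
      trace_diagonal, dotProduct]
  · rintro _ ⟨P, hP, rfl⟩
    have hQ : Uᵀ * P * V ∈ orthogonalGroup ι R :=
      mul_mem (mul_mem (transpose_mem_orthogonalGroup hU) hP) hV
    simp only [trace_conj_mul_conj, trace_diagonal_mul_mul_diagonal_mul_transpose]
    exact hab.vecMul_dotProduct_le_of_mem_doublyStochastic (hadamard_self_mem_doublyStochastic hQ)

end VonNeumann

theorem Matrix.IsHermitian.exists_mem_orthogonalGroup_eq_conj_diagonal_comp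
    {ι : Type*} [Fintype ι] [DecidableEq ι] {A : Matrix ι ι ℝ} (hA : A.IsHermitian)
    (σ : Equiv.Perm ι) :
    ∃ U ∈ orthogonalGroup ι ℝ, A = U * diagonal (hA.eigenvalues ∘ σ) * Uᵀ := by
  set U₀ : Matrix ι ι ℝ := (hA.eigenvectorUnitary : Matrix ι ι ℝ)
  have hU₀ : U₀ᵀ * U₀ = 1 := by
    simpa [star_eq_conjTranspose, conjTranspose_eq_transpose_of_trivial] using
      (mem_unitaryGroup_iff'.1 hA.eigenvectorUnitary.2)
  have hA₀ : A = U₀ * diagonal hA.eigenvalues * U₀ᵀ := by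
    simpa [star_eq_conjTranspose, conjTranspose_eq_transpose_of_trivial] using hA.spectral_theorem
  refine ⟨U₀.submatrix id σ, (mem_orthogonalGroup_iff' ι ℝ).2 ?_, ?_⟩
  · rw [transpose_submatrix, ← submatrix_mul _ _ _ _ _ Function.bijective_id, hU₀,
      submatrix_one_equiv]
  · rw [← submatrix_diagonal_equiv, transpose_submatrix, submatrix_mul_equiv,
      submatrix_mul_equiv, submatrix_id_id]
    exact hA₀

theorem frobSq_eq_trace_mul_transpose {m n : ℕ} (A : Matrix (Fin m) (Fin n) ℝ) :
    frobSq A = trace (A * Aᵀ) := by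
  simp [frobSq, ← sum_hadamard_eq, hadamard_apply, sq]

theorem frobSq_conj_diagonal {n : ℕ} {U : Matrix (Fin n) (Fin n) ℝ}
    (hU : U ∈ orthogonalGroup (Fin n) ℝ) (a : Fin n → ℝ) :
    frobSq (U * diagonal a * Uᵀ) = a ⬝ᵥ a := by
  rw [frobSq_eq_trace_mul_transpose]
  simp only [transpose_mul, transpose_transpose, diagonal_transpose, Matrix.mul_assoc]
  rw [← Matrix.mul_assoc Uᵀ U, (mem_orthogonalGroup_iff' _ ℝ).1 hU, Matrix.one_mul,
    trace_mul_comm]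
  simp only [Matrix.mul_assoc, (mem_orthogonalGroup_iff' _ ℝ).1 hU, Matrix.mul_one,
    diagonal_mul_diagonal, trace_diagonal, dotProduct]

theorem eigDesc_antitone {n : ℕ} {A : Matrix (Fin n) (Fin n) ℝ} (hA : A.IsHermitian) :
    Antitone (eigDesc hA) :=
  fun _ _ hij => Tuple.monotone_sort hA.eigenvalues (Fin.rev_le_rev.mpr hij)

theorem Matrix.IsHermitian.exists_mem_orthogonalGroup_eq_conj_diagonal_eigDesc {n : ℕ}
    {A : Matrix (Fin n) (Fin n) ℝ} (hA : A.IsHermitian) :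
    ∃ U ∈ orthogonalGroup (Fin n) ℝ, A = U * diagonal (eigDesc hA) * Uᵀ :=
  hA.exists_mem_orthogonalGroup_eq_conj_diagonal_comp (Fin.revPerm.trans (Tuple.sort _))

theorem OGWo_eq_sum_sq_eigDesc_sub {n : ℕ} {C D : Matrix (Fin n) (Fin n) ℝ}
    (hC : C.IsHermitian) (hD : D.IsHermitian) :
    OGWo n C D = 1 / (n : ℝ) ^ 2 * ∑ i, (eigDesc hC i - eigDesc hD i) ^ 2 := by
  obtain ⟨U, hU, hCU⟩ := hC.exists_mem_orthogonalGroup_eq_conj_diagonal_eigDesc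
  obtain ⟨V, hV, hDV⟩ := hD.exists_mem_orthogonalGroup_eq_conj_diagonal_eigDesc
  have hsup := ((eigDesc_antitone hC).monovary (eigDesc_antitone hD)
    |>.isGreatest_trace_conj_diagonal hU hV).csSup_eq
  rw [← hCU, ← hDV] at hsup
  rw [OGWo, hsup, (congrArg frobSq hCU).trans (frobSq_conj_diagonal hU _),
    (congrArg frobSq hDV).trans (frobSq_conj_diagonal hV _)]
  simp only [dotProduct, sub_sq, Finset.sum_add_distrib, Finset.sum_sub_distrib, Finset.mul_sum]
  ring_nf

theorem sqrt_OGWo_eq_dist {n : ℕ} {C D : Matrix (Fin n) (Fin n) ℝ}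
    (hC : C.IsHermitian) (hD : D.IsHermitian) :
    √(OGWo n C D) = dist (WithLp.toLp 2 (eigDesc hC) : EuclideanSpace ℝ (Fin n))
      (WithLp.toLp 2 (eigDesc hD)) / n := by
  rw [OGWo_eq_sum_sq_eigDesc_sub hC hD, EuclideanSpace.dist_eq, Real.sqrt_mul (by positivity),
    one_div, Real.sqrt_inv, Real.sqrt_sq n.cast_nonneg, inv_mul_eq_div]
  simp [Real.dist_eq, sq_abs]

theorem OGWo_closed_form (n : ℕ) (C D : Matrix (Fin n) (Fin n) ℝ)
    (hC : C.IsHermitian) (hD : D.IsHermitian) :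
    OGWo n C D = (1 / (n : ℝ) ^ 2) * ∑ i, (eigDesc hC i - eigDesc hD i) ^ 2
    ∧ 0 ≤ OGWo n C D
    ∧ OGWo n C D = OGWo n D C
    ∧ (∀ E : Matrix (Fin n) (Fin n) ℝ, E.IsHermitian →
        Real.sqrt (OGWo n C E) ≤ Real.sqrt (OGWo n C D) + Real.sqrt (OGWo n D E)) := by
  refine ⟨OGWo_eq_sum_sq_eigDesc_sub hC hD, ?_, ?_, fun E hE => ?_⟩
  · rw [OGWo_eq_sum_sq_eigDesc_sub hC hD]
    positivity
  · simp only [OGWo_eq_sum_sq_eigDesc_sub hC hD, OGWo_eq_sum_sq_eigDesc_sub hD hC, sub_sq_comm]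
  · rw [sqrt_OGWo_eq_dist hC hE, sqrt_OGWo_eq_dist hC hD, sqrt_OGWo_eq_dist hD hE, ← add_div]
    gcongr
    exact dist_triangle _ _ _

end
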